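/- Let a > b > 0 and k' = a*b/(2*(a+b)²). For any triangle P₁P₂P₃ inscribed in the circle of radius a + b centered at the origin whose three side lines are each tangent to the concentric ellipse x²/a² + y²/b² = 1, the triple (x, y, z) of cosines of its interior angles lies on the intersection of the sphere x² + y² + z² + 2·k' − 1 = 0 with the Titeica surface x·y·z − k' = 0; that is, x² + y² + z² = 1 − 2·k' and x·y·z = k'. -/
import Mathlib

open EuclideanGeometry

/-- The line through `P` and `Q` is tangent to the ellipse `x²/a² + y²/b² = 1`:
it lies on a line `{(x,y) : p·x + q·y = 1}` with `a²p² + b²q² = 1`. -/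
def SideTangentToEllipse (a b : ℝ) (P Q : EuclideanSpace ℝ (Fin 2)) : Prop :=
  ∃ p q : ℝ, a ^ 2 * p ^ 2 + b ^ 2 * q ^ 2 = 1 ∧
    p * P 0 + q * P 1 = 1 ∧ p * Q 0 + q * Q 1 = 1

private lemma coord_circle (a b : ℝ) (P : EuclideanSpace ℝ (Fin 2)) (h : dist P 0 = a + b) :
    (P 0)^2 + (P 1)^2 = (a+b)^2 := by
  have h2 : dist P 0 ^ 2 = (a+b)^2 := by rw [h]
  rw [EuclideanSpace.dist_eq, Real.sq_sqrt (by positivity)] at h2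
  simpa [Fin.sum_univ_two, Real.dist_eq, sq_abs] using h2

private lemma coord_dist (P Q : EuclideanSpace ℝ (Fin 2)) :
    dist P Q ^ 2 = (P 0 - Q 0)^2 + (P 1 - Q 1)^2 := by
  rw [EuclideanSpace.dist_eq, Real.sq_sqrt (by positivity)]
  simp [Fin.sum_univ_two, Real.dist_eq, sq_abs]

private lemma tangent_bilinear (a b x1 y1 x2 y2 : ℝ)
    (hne : (x1 - x2)^2 + (y1 - y2)^2 ≠ 0) (hab : (0:ℝ) < a + b)
    (hc1 : x1^2 + y1^2 = (a+b)^2) (hc2 : x2^2 + y2^2 = (a+b)^2)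
    (p q : ℝ) (htan : a^2*p^2 + b^2*q^2 = 1)
    (h1 : p*x1 + q*y1 = 1) (h2 : p*x2 + q*y2 = 1) :
    b*(x1*x2) + a*(y1*y2) + a*b*(a+b) = 0 := by
  have hS : a^2*(y1-y2)^2 + b^2*(x1-x2)^2 = (x1*y2 - x2*y1)^2 := by
    linear_combination (x1*y2-x2*y1)^2*htan
      - a^2*(p*(x1*y2-x2*y1)+y2-y1)*(y2*h1 - y1*h2)
      - b^2*(q*(x1*y2-x2*y1)+x1-x2)*(x1*h2 - x2*h1)
  have hwT : ((x1-x2)^2+(y1-y2)^2) * (b*(x1*x2) + a*(y1*y2) + a*b*(a+b)) = 0 := by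
    linear_combination (-(a+b))*hS
      + (b^3 + 2*a*b^2 + a^2*b - y2^2*b - y2^2*a - 2*x2^2*b + y1*y2*a + x1*x2*b)*hc1
      + (-b^3 - 2*a*b^2 - a^2*b + y1*y2*a + y1^2*b - y1^2*a + x1*x2*b)*hc2
  rcases mul_eq_zero.mp hwT with h | h
  · exact absurd h hne
  · exact h

/-- For `a > b > 0` and `k' = ab/(2(a+b)²)`: the triple `(x, y, z)` of
interior-angle cosines of any triangle of the circumcircle family lies on the
intersection of the sphere `x² + y² + z² + 2k' - 1 = 0` with the Titeica
surface `xyz - k' = 0`. -/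
theorem circumcircle_family_sphere_titeica (a b : ℝ) (hb : 0 < b) (hab : b < a)
    (k' : ℝ) (hk' : k' = a * b / (2 * (a + b) ^ 2))
    (P₁ P₂ P₃ : EuclideanSpace ℝ (Fin 2))
    (hind : AffineIndependent ℝ ![P₁, P₂, P₃])
    (hC₁ : dist P₁ 0 = a + b) (hC₂ : dist P₂ 0 = a + b) (hC₃ : dist P₃ 0 = a + b)
    (ht₁ : SideTangentToEllipse a b P₁ P₂)
    (ht₂ : SideTangentToEllipse a b P₂ P₃)
    (ht₃ : SideTangentToEllipse a b P₃ P₁)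
    (x y z : ℝ)
    (hx : x = Real.cos (∠ P₂ P₁ P₃)) (hy : y = Real.cos (∠ P₁ P₂ P₃))
    (hz : z = Real.cos (∠ P₁ P₃ P₂)) :
    x ^ 2 + y ^ 2 + z ^ 2 = 1 - 2 * k' ∧ x * y * z = k' := by
  have hR : (0:ℝ) < a + b := by linarith
  have hinj := hind.injective
  have h12 : P₁ ≠ P₂ := by
    intro h
    have h01 : (![P₁,P₂,P₃] : Fin 3 → EuclideanSpace ℝ (Fin 2)) 0 = ![P₁,P₂,P₃] 1 := by
      simp [h]
    exact absurd (hinj h01) (by decide)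
  have h23 : P₂ ≠ P₃ := by
    intro h
    have h01 : (![P₁,P₂,P₃] : Fin 3 → EuclideanSpace ℝ (Fin 2)) 1 = ![P₁,P₂,P₃] 2 := by
      simp [h]
    exact absurd (hinj h01) (by decide)
  have h13 : P₁ ≠ P₃ := by
    intro h
    have h01 : (![P₁,P₂,P₃] : Fin 3 → EuclideanSpace ℝ (Fin 2)) 0 = ![P₁,P₂,P₃] 2 := by
      simp [h]
    exact absurd (hinj h01) (by decide)
  have hc1 := coord_circle a b P₁ hC₁
  have hc2 := coord_circle a b P₂ hC₂
  have hc3 := coord_circle a b P₃ hC₃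
  have hd12 : dist P₁ P₂ ≠ 0 := dist_ne_zero.mpr h12
  have hd23 : dist P₂ P₃ ≠ 0 := dist_ne_zero.mpr h23
  have hd13 : dist P₁ P₃ ≠ 0 := dist_ne_zero.mpr h13
  have hne12 : ((P₁ 0) - (P₂ 0))^2 + ((P₁ 1) - (P₂ 1))^2 ≠ 0 := by
    rw [← coord_dist]; exact pow_ne_zero 2 hd12
  have hne23 : ((P₂ 0) - (P₃ 0))^2 + ((P₂ 1) - (P₃ 1))^2 ≠ 0 := by
    rw [← coord_dist]; exact pow_ne_zero 2 hd23
  have hd31 : dist P₃ P₁ ≠ 0 := by rw [dist_comm]; exact hd13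
  have hne31 : ((P₃ 0) - (P₁ 0))^2 + ((P₃ 1) - (P₁ 1))^2 ≠ 0 := by
    rw [← coord_dist]; exact pow_ne_zero 2 hd31
  obtain ⟨p₁, q₁, htn₁, hl₁a, hl₁b⟩ := ht₁
  obtain ⟨p₂, q₂, htn₂, hl₂a, hl₂b⟩ := ht₂
  obtain ⟨p₃, q₃, htn₃, hl₃a, hl₃b⟩ := ht₃
  have hT12 := tangent_bilinear a b (P₁ 0) (P₁ 1) (P₂ 0) (P₂ 1) hne12 hR hc1 hc2 p₁ q₁
    (by linear_combination htn₁) hl₁a hl₁b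
  have hT23 := tangent_bilinear a b (P₂ 0) (P₂ 1) (P₃ 0) (P₃ 1) hne23 hR hc2 hc3 p₂ q₂
    (by linear_combination htn₂) hl₂a hl₂b
  have hT31 := tangent_bilinear a b (P₃ 0) (P₃ 1) (P₁ 0) (P₁ 1) hne31 hR hc3 hc1 p₃ q₃
    (by linear_combination htn₃) hl₃a hl₃b
  have hG : (dist P₁ P₃ ^2 + dist P₁ P₂ ^2 - dist P₂ P₃ ^2) *
      ((dist P₁ P₂ ^2 + dist P₂ P₃ ^2 - dist P₁ P₃ ^2) *
      (dist P₁ P₃ ^2 + dist P₂ P₃ ^2 - dist P₁ P₂ ^2)) * (a+b)^2 =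
      4*a*b*(dist P₂ P₃ ^2 * (dist P₁ P₃ ^2 * dist P₁ P₂ ^2)) := by
    rw [coord_dist P₁ P₃, coord_dist P₁ P₂, coord_dist P₂ P₃]
    linear_combination
      ((-32)*a^2*b^4 + (-64)*a^3*b^3 + (-32)*a^4*b^2 + (-12)*(P₃ 1)^2*a*b^3 + (-8)*(P₃ 1)^2*a^2*b^2 + (4)*(P₃ 1)^2*a^3*b + (-4)*(P₃ 1)^4*a*b + (4)*(P₃ 0)^2*a*b^3 + (-8)*(P₃ 0)^2*a^2*b^2 + (-12)*(P₃ 0)^2*a^3*b + (-8)*(P₃ 0)^2*(P₃ 1)^2*a*b + (-4)*(P₃ 0)^4*a*b + (8)*(P₂ 1)*(P₃ 1)*a*b^3 + (16)*(P₂ 1)*(P₃ 1)*a^2*b^2 + (8)*(P₂ 1)*(P₃ 1)*a^3*b + (-8)*(P₂ 1)*(P₃ 1)^3*b^2 + (-8)*(P₂ 1)*(P₃ 1)^3*a*b + (-8)*(P₂ 1)*(P₃ 1)^3*a^2 + (-8)*(P₂ 1)*(P₃ 0)^2*(P₃ 1)*a*b + (-16)*(P₂ 1)*(P₃ 0)^2*(P₃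 1)*a^2 + (-12)*(P₂ 1)^2*a*b^3 + (-8)*(P₂ 1)^2*a^2*b^2 + (4)*(P₂ 1)^2*a^3*b + (16)*(P₂ 1)^2*(P₃ 1)^2*b^2 + (40)*(P₂ 1)^2*(P₃ 1)^2*a*b + (16)*(P₂ 1)^2*(P₃ 1)^2*a^2 + (-8)*(P₂ 1)^2*(P₃ 0)^2*a*b + (-8)*(P₂ 1)^3*(P₃ 1)*b^2 + (-8)*(P₂ 1)^3*(P₃ 1)*a*b + (-8)*(P₂ 1)^3*(P₃ 1)*a^2 + (-4)*(P₂ 1)^4*a*b + (8)*(P₂ 0)*(P₃ 0)*a*b^3 + (16)*(P₂ 0)*(P₃ 0)*a^2*b^2 + (8)*(P₂ 0)*(P₃ 0)*a^3*b + (-16)*(P₂ 0)*(P₃ 0)*(P₃ 1)^2*b^2 + (-8)*(P₂ 0)*(P₃ 0)*(P₃ 1)^2*a*b + (-8)*(P₂ 0)*(P₃ 0)^3*b^2 + (-8)*(P₂ 0)*(P₃ 0)^3*a*b + (-8)*(P₂ 0)*(P₃ 0)^3*a^2 + (32)*(P₂ 0)*(P₂ 1)*(P₃ 0)*(P₃ 1)*b^2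 + (96)*(P₂ 0)*(P₂ 1)*(P₃ 0)*(P₃ 1)*a*b + (32)*(P₂ 0)*(P₂ 1)*(P₃ 0)*(P₃ 1)*a^2 + (-16)*(P₂ 0)*(P₂ 1)^2*(P₃ 0)*b^2 + (-8)*(P₂ 0)*(P₂ 1)^2*(P₃ 0)*a*b + (4)*(P₂ 0)^2*a*b^3 + (-8)*(P₂ 0)^2*a^2*b^2 + (-12)*(P₂ 0)^2*a^3*b + (-8)*(P₂ 0)^2*(P₃ 1)^2*a*b + (16)*(P₂ 0)^2*(P₃ 0)^2*b^2 + (40)*(P₂ 0)^2*(P₃ 0)^2*a*b + (16)*(P₂ 0)^2*(P₃ 0)^2*a^2 + (-8)*(P₂ 0)^2*(P₂ 1)*(P₃ 1)*a*b + (-16)*(P₂ 0)^2*(P₂ 1)*(P₃ 1)*a^2 + (-8)*(P₂ 0)^2*(P₂ 1)^2*a*b + (-8)*(P₂ 0)^3*(P₃ 0)*b^2 + (-8)*(P₂ 0)^3*(P₃ 0)*a*b + (-8)*(P₂ 0)^3*(P₃ 0)*a^2 + (-4)*(P₂ 0)^4*a*b + (12)*(P₁ 1)*(P₃ 1)*a*b^3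 + (8)*(P₁ 1)*(P₃ 1)*a^2*b^2 + (-4)*(P₁ 1)*(P₃ 1)*a^3*b + (8)*(P₁ 1)*(P₃ 1)^3*b^2 + (4)*(P₁ 1)*(P₃ 1)^3*a*b + (8)*(P₁ 1)*(P₃ 1)^3*a^2 + (20)*(P₁ 1)*(P₃ 0)^2*(P₃ 1)*a*b + (12)*(P₁ 1)*(P₂ 1)*a*b^3 + (8)*(P₁ 1)*(P₂ 1)*a^2*b^2 + (-4)*(P₁ 1)*(P₂ 1)*a^3*b + (-8)*(P₁ 1)*(P₂ 1)*(P₃ 1)^2*b^2 + (-16)*(P₁ 1)*(P₂ 1)*(P₃ 1)^2*a*b + (8)*(P₁ 1)*(P₂ 1)*(P₃ 1)^2*a^2 + (-8)*(P₁ 1)*(P₂ 1)^2*(P₃ 1)*b^2 + (-16)*(P₁ 1)*(P₂ 1)^2*(P₃ 1)*a*b + (8)*(P₁ 1)*(P₂ 1)^2*(P₃ 1)*a^2 + (8)*(P₁ 1)*(P₂ 1)^3*b^2 + (4)*(P₁ 1)*(P₂ 1)^3*a*b + (8)*(P₁ 1)*(P₂ 1)^3*a^2 + (-16)*(P₁ 1)*(P₂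 0)*(P₃ 0)*(P₃ 1)*a*b + (-16)*(P₁ 1)*(P₂ 0)*(P₂ 1)*(P₃ 0)*a*b + (20)*(P₁ 1)*(P₂ 0)^2*(P₂ 1)*a*b + (-8)*(P₁ 1)^2*a*b^3 + (-16)*(P₁ 1)^2*a^2*b^2 + (-8)*(P₁ 1)^2*a^3*b + (-8)*(P₁ 1)^2*(P₃ 1)^2*b^2 + (-16)*(P₁ 1)^2*(P₃ 1)^2*a*b + (-8)*(P₁ 1)^2*(P₃ 1)^2*a^2 + (16)*(P₁ 1)^2*(P₂ 1)*(P₃ 1)*b^2 + (40)*(P₁ 1)^2*(P₂ 1)*(P₃ 1)*a*b + (16)*(P₁ 1)^2*(P₂ 1)*(P₃ 1)*a^2 + (-8)*(P₁ 1)^2*(P₂ 1)^2*b^2 + (-16)*(P₁ 1)^2*(P₂ 1)^2*a*b + (-8)*(P₁ 1)^2*(P₂ 1)^2*a^2 + (8)*(P₁ 1)^2*(P₂ 0)*(P₃ 0)*a*b + (-4)*(P₁ 0)*(P₃ 0)*a*b^3 + (8)*(P₁ 0)*(P₃ 0)*a^2*b^2 + (12)*(P₁ 0)*(P₃ 0)*a^3*b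 + (20)*(P₁ 0)*(P₃ 0)*(P₃ 1)^2*a*b + (8)*(P₁ 0)*(P₃ 0)^3*b^2 + (4)*(P₁ 0)*(P₃ 0)^3*a*b + (8)*(P₁ 0)*(P₃ 0)^3*a^2 + (-16)*(P₁ 0)*(P₂ 1)*(P₃ 0)*(P₃ 1)*a*b + (-4)*(P₁ 0)*(P₂ 0)*a*b^3 + (8)*(P₁ 0)*(P₂ 0)*a^2*b^2 + (12)*(P₁ 0)*(P₂ 0)*a^3*b + (8)*(P₁ 0)*(P₂ 0)*(P₃ 0)^2*b^2 + (-16)*(P₁ 0)*(P₂ 0)*(P₃ 0)^2*a*b + (-8)*(P₁ 0)*(P₂ 0)*(P₃ 0)^2*a^2 + (-16)*(P₁ 0)*(P₂ 0)*(P₂ 1)*(P₃ 1)*a*b + (20)*(P₁ 0)*(P₂ 0)*(P₂ 1)^2*a*b + (8)*(P₁ 0)*(P₂ 0)^2*(P₃ 0)*b^2 + (-16)*(P₁ 0)*(P₂ 0)^2*(P₃ 0)*a*b + (-8)*(P₁ 0)*(P₂ 0)^2*(P₃ 0)*a^2 + (8)*(P₁ 0)*(P₂ 0)^3*b^2 +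 (4)*(P₁ 0)*(P₂ 0)^3*a*b + (8)*(P₁ 0)*(P₂ 0)^3*a^2 + (-16)*(P₁ 0)*(P₁ 1)*(P₃ 0)*(P₃ 1)*b^2 + (-32)*(P₁ 0)*(P₁ 1)*(P₃ 0)*(P₃ 1)*a*b + (-16)*(P₁ 0)*(P₁ 1)*(P₃ 0)*(P₃ 1)*a^2 + (16)*(P₁ 0)*(P₁ 1)*(P₂ 1)*(P₃ 0)*b^2 + (32)*(P₁ 0)*(P₁ 1)*(P₂ 1)*(P₃ 0)*a*b + (16)*(P₁ 0)*(P₁ 1)*(P₂ 1)*(P₃ 0)*a^2 + (16)*(P₁ 0)*(P₁ 1)*(P₂ 0)*(P₃ 1)*b^2 + (32)*(P₁ 0)*(P₁ 1)*(P₂ 0)*(P₃ 1)*a*b + (16)*(P₁ 0)*(P₁ 1)*(P₂ 0)*(P₃ 1)*a^2 + (-16)*(P₁ 0)*(P₁ 1)*(P₂ 0)*(P₂ 1)*b^2 + (-32)*(P₁ 0)*(P₁ 1)*(P₂ 0)*(P₂ 1)*a*b + (-16)*(P₁ 0)*(P₁ 1)*(P₂ 0)*(P₂ 1)*a^2 +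 (-8)*(P₁ 0)^2*a*b^3 + (-16)*(P₁ 0)^2*a^2*b^2 + (-8)*(P₁ 0)^2*a^3*b + (-8)*(P₁ 0)^2*(P₃ 0)^2*b^2 + (-16)*(P₁ 0)^2*(P₃ 0)^2*a*b + (-8)*(P₁ 0)^2*(P₃ 0)^2*a^2 + (8)*(P₁ 0)^2*(P₂ 1)*(P₃ 1)*a*b + (16)*(P₁ 0)^2*(P₂ 0)*(P₃ 0)*b^2 + (40)*(P₁ 0)^2*(P₂ 0)*(P₃ 0)*a*b + (16)*(P₁ 0)^2*(P₂ 0)*(P₃ 0)*a^2 + (-8)*(P₁ 0)^2*(P₂ 0)^2*b^2 + (-16)*(P₁ 0)^2*(P₂ 0)^2*a*b + (-8)*(P₁ 0)^2*(P₂ 0)^2*a^2)*hc1 +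
      ((-32)*a^2*b^4 + (-64)*a^3*b^3 + (-32)*a^4*b^2 + (-12)*(P₃ 1)^2*a*b^3 + (-8)*(P₃ 1)^2*a^2*b^2 + (4)*(P₃ 1)^2*a^3*b + (-4)*(P₃ 1)^4*a*b + (4)*(P₃ 0)^2*a*b^3 + (-8)*(P₃ 0)^2*a^2*b^2 + (-12)*(P₃ 0)^2*a^3*b + (-8)*(P₃ 0)^2*(P₃ 1)^2*a*b + (-4)*(P₃ 0)^4*a*b + (12)*(P₂ 1)*(P₃ 1)*a*b^3 + (8)*(P₂ 1)*(P₃ 1)*a^2*b^2 + (-4)*(P₂ 1)*(P₃ 1)*a^3*b + (8)*(P₂ 1)*(P₃ 1)^3*b^2 + (4)*(P₂ 1)*(P₃ 1)^3*a*b + (8)*(P₂ 1)*(P₃ 1)^3*a^2 + (20)*(P₂ 1)*(P₃ 0)^2*(P₃ 1)*a*b + (-8)*(P₂ 1)^2*a*b^3 + (-16)*(P₂ 1)^2*a^2*b^2 + (-8)*(P₂ 1)^2*a^3*b + (-8)*(P₂ 1)^2*(P₃ 1)^2*b^2 + (-16)*(P₂ 1)^2*(P₃ 1)^2*a*b + (-8)*(P₂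 1)^2*(P₃ 1)^2*a^2 + (-4)*(P₂ 0)*(P₃ 0)*a*b^3 + (8)*(P₂ 0)*(P₃ 0)*a^2*b^2 + (12)*(P₂ 0)*(P₃ 0)*a^3*b + (20)*(P₂ 0)*(P₃ 0)*(P₃ 1)^2*a*b + (8)*(P₂ 0)*(P₃ 0)^3*b^2 + (4)*(P₂ 0)*(P₃ 0)^3*a*b + (8)*(P₂ 0)*(P₃ 0)^3*a^2 + (-16)*(P₂ 0)*(P₂ 1)*(P₃ 0)*(P₃ 1)*b^2 + (-32)*(P₂ 0)*(P₂ 1)*(P₃ 0)*(P₃ 1)*a*b + (-16)*(P₂ 0)*(P₂ 1)*(P₃ 0)*(P₃ 1)*a^2 + (-8)*(P₂ 0)^2*a*b^3 + (-16)*(P₂ 0)^2*a^2*b^2 + (-8)*(P₂ 0)^2*a^3*b + (-8)*(P₂ 0)^2*(P₃ 0)^2*b^2 + (-16)*(P₂ 0)^2*(P₃ 0)^2*a*b + (-8)*(P₂ 0)^2*(P₃ 0)^2*a^2 + (8)*(P₁ 1)*(P₃ 1)*a*b^3 + (16)*(P₁ 1)*(P₃ 1)*a^2*b^2 + (8)*(P₁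 1)*(P₃ 1)*a^3*b + (-8)*(P₁ 1)*(P₃ 1)^3*b^2 + (-8)*(P₁ 1)*(P₃ 1)^3*a*b + (-8)*(P₁ 1)*(P₃ 1)^3*a^2 + (-8)*(P₁ 1)*(P₃ 0)^2*(P₃ 1)*a*b + (-16)*(P₁ 1)*(P₃ 0)^2*(P₃ 1)*a^2 + (12)*(P₁ 1)*(P₂ 1)*a*b^3 + (8)*(P₁ 1)*(P₂ 1)*a^2*b^2 + (-4)*(P₁ 1)*(P₂ 1)*a^3*b + (-8)*(P₁ 1)*(P₂ 1)*(P₃ 1)^2*b^2 + (-16)*(P₁ 1)*(P₂ 1)*(P₃ 1)^2*a*b + (8)*(P₁ 1)*(P₂ 1)*(P₃ 1)^2*a^2 + (16)*(P₁ 1)*(P₂ 1)^2*(P₃ 1)*b^2 + (40)*(P₁ 1)*(P₂ 1)^2*(P₃ 1)*a*b + (16)*(P₁ 1)*(P₂ 1)^2*(P₃ 1)*a^2 + (-16)*(P₁ 1)*(P₂ 0)*(P₃ 0)*(P₃ 1)*a*b + (16)*(P₁ 1)*(P₂ 0)*(P₂ 1)*(P₃ 0)*b^2 + (32)*(P₁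 1)*(P₂ 0)*(P₂ 1)*(P₃ 0)*a*b + (16)*(P₁ 1)*(P₂ 0)*(P₂ 1)*(P₃ 0)*a^2 + (8)*(P₁ 1)*(P₂ 0)^2*(P₃ 1)*a*b + (-12)*(P₁ 1)^2*a*b^3 + (-8)*(P₁ 1)^2*a^2*b^2 + (4)*(P₁ 1)^2*a^3*b + (16)*(P₁ 1)^2*(P₃ 1)^2*b^2 + (40)*(P₁ 1)^2*(P₃ 1)^2*a*b + (16)*(P₁ 1)^2*(P₃ 1)^2*a^2 + (-8)*(P₁ 1)^2*(P₃ 0)^2*a*b + (-8)*(P₁ 1)^2*(P₂ 1)*(P₃ 1)*b^2 + (-16)*(P₁ 1)^2*(P₂ 1)*(P₃ 1)*a*b + (8)*(P₁ 1)^2*(P₂ 1)*(P₃ 1)*a^2 + (-8)*(P₁ 1)^2*(P₂ 1)^2*b^2 + (-16)*(P₁ 1)^2*(P₂ 1)^2*a*b + (-8)*(P₁ 1)^2*(P₂ 1)^2*a^2 + (-8)*(P₁ 1)^3*(P₃ 1)*b^2 + (-8)*(P₁ 1)^3*(P₃ 1)*a*b + (-8)*(P₁ 1)^3*(P₃ 1)*a^2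 + (8)*(P₁ 1)^3*(P₂ 1)*b^2 + (4)*(P₁ 1)^3*(P₂ 1)*a*b + (8)*(P₁ 1)^3*(P₂ 1)*a^2 + (-4)*(P₁ 1)^4*a*b + (8)*(P₁ 0)*(P₃ 0)*a*b^3 + (16)*(P₁ 0)*(P₃ 0)*a^2*b^2 + (8)*(P₁ 0)*(P₃ 0)*a^3*b + (-16)*(P₁ 0)*(P₃ 0)*(P₃ 1)^2*b^2 + (-8)*(P₁ 0)*(P₃ 0)*(P₃ 1)^2*a*b + (-8)*(P₁ 0)*(P₃ 0)^3*b^2 + (-8)*(P₁ 0)*(P₃ 0)^3*a*b + (-8)*(P₁ 0)*(P₃ 0)^3*a^2 + (-16)*(P₁ 0)*(P₂ 1)*(P₃ 0)*(P₃ 1)*a*b + (8)*(P₁ 0)*(P₂ 1)^2*(P₃ 0)*a*b + (-4)*(P₁ 0)*(P₂ 0)*a*b^3 + (8)*(P₁ 0)*(P₂ 0)*a^2*b^2 + (12)*(P₁ 0)*(P₂ 0)*a^3*b + (8)*(P₁ 0)*(P₂ 0)*(P₃ 0)^2*b^2 + (-16)*(P₁ 0)*(P₂ 0)*(P₃ 0)^2*a*b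 + (-8)*(P₁ 0)*(P₂ 0)*(P₃ 0)^2*a^2 + (16)*(P₁ 0)*(P₂ 0)*(P₂ 1)*(P₃ 1)*b^2 + (32)*(P₁ 0)*(P₂ 0)*(P₂ 1)*(P₃ 1)*a*b + (16)*(P₁ 0)*(P₂ 0)*(P₂ 1)*(P₃ 1)*a^2 + (16)*(P₁ 0)*(P₂ 0)^2*(P₃ 0)*b^2 + (40)*(P₁ 0)*(P₂ 0)^2*(P₃ 0)*a*b + (16)*(P₁ 0)*(P₂ 0)^2*(P₃ 0)*a^2 + (32)*(P₁ 0)*(P₁ 1)*(P₃ 0)*(P₃ 1)*b^2 + (96)*(P₁ 0)*(P₁ 1)*(P₃ 0)*(P₃ 1)*a*b + (32)*(P₁ 0)*(P₁ 1)*(P₃ 0)*(P₃ 1)*a^2 + (-16)*(P₁ 0)*(P₁ 1)*(P₂ 1)*(P₃ 0)*a*b + (-16)*(P₁ 0)*(P₁ 1)*(P₂ 0)*(P₃ 1)*a*b + (-16)*(P₁ 0)*(P₁ 1)*(P₂ 0)*(P₂ 1)*b^2 + (-32)*(P₁ 0)*(P₁ 1)*(P₂ 0)*(P₂ 1)*a*b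 + (-16)*(P₁ 0)*(P₁ 1)*(P₂ 0)*(P₂ 1)*a^2 + (-16)*(P₁ 0)*(P₁ 1)^2*(P₃ 0)*b^2 + (-8)*(P₁ 0)*(P₁ 1)^2*(P₃ 0)*a*b + (20)*(P₁ 0)*(P₁ 1)^2*(P₂ 0)*a*b + (4)*(P₁ 0)^2*a*b^3 + (-8)*(P₁ 0)^2*a^2*b^2 + (-12)*(P₁ 0)^2*a^3*b + (-8)*(P₁ 0)^2*(P₃ 1)^2*a*b + (16)*(P₁ 0)^2*(P₃ 0)^2*b^2 + (40)*(P₁ 0)^2*(P₃ 0)^2*a*b + (16)*(P₁ 0)^2*(P₃ 0)^2*a^2 + (8)*(P₁ 0)^2*(P₂ 0)*(P₃ 0)*b^2 + (-16)*(P₁ 0)^2*(P₂ 0)*(P₃ 0)*a*b + (-8)*(P₁ 0)^2*(P₂ 0)*(P₃ 0)*a^2 + (-8)*(P₁ 0)^2*(P₂ 0)^2*b^2 + (-16)*(P₁ 0)^2*(P₂ 0)^2*a*b + (-8)*(P₁ 0)^2*(P₂ 0)^2*a^2 + (-8)*(P₁ 0)^2*(P₁ 1)*(P₃ 1)*a*b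 + (-16)*(P₁ 0)^2*(P₁ 1)*(P₃ 1)*a^2 + (20)*(P₁ 0)^2*(P₁ 1)*(P₂ 1)*a*b + (-8)*(P₁ 0)^2*(P₁ 1)^2*a*b + (-8)*(P₁ 0)^3*(P₃ 0)*b^2 + (-8)*(P₁ 0)^3*(P₃ 0)*a*b + (-8)*(P₁ 0)^3*(P₃ 0)*a^2 + (8)*(P₁ 0)^3*(P₂ 0)*b^2 + (4)*(P₁ 0)^3*(P₂ 0)*a*b + (8)*(P₁ 0)^3*(P₂ 0)*a^2 + (-4)*(P₁ 0)^4*a*b)*hc2 +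
      ((-32)*a^2*b^4 + (-64)*a^3*b^3 + (-32)*a^4*b^2 + (-8)*(P₃ 1)^2*a*b^3 + (-16)*(P₃ 1)^2*a^2*b^2 + (-8)*(P₃ 1)^2*a^3*b + (-8)*(P₃ 0)^2*a*b^3 + (-16)*(P₃ 0)^2*a^2*b^2 + (-8)*(P₃ 0)^2*a^3*b + (12)*(P₂ 1)*(P₃ 1)*a*b^3 + (8)*(P₂ 1)*(P₃ 1)*a^2*b^2 + (-4)*(P₂ 1)*(P₃ 1)*a^3*b + (-12)*(P₂ 1)^2*a*b^3 + (-8)*(P₂ 1)^2*a^2*b^2 + (4)*(P₂ 1)^2*a^3*b + (-8)*(P₂ 1)^2*(P₃ 1)^2*b^2 + (-16)*(P₂ 1)^2*(P₃ 1)^2*a*b + (-8)*(P₂ 1)^2*(P₃ 1)^2*a^2 + (8)*(P₂ 1)^3*(P₃ 1)*b^2 + (4)*(P₂ 1)^3*(P₃ 1)*a*b + (8)*(P₂ 1)^3*(P₃ 1)*a^2 + (-4)*(P₂ 1)^4*a*b + (-4)*(P₂ 0)*(P₃ 0)*a*b^3 + (8)*(P₂ 0)*(P₃ 0)*a^2*b^2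 + (12)*(P₂ 0)*(P₃ 0)*a^3*b + (-16)*(P₂ 0)*(P₂ 1)*(P₃ 0)*(P₃ 1)*b^2 + (-32)*(P₂ 0)*(P₂ 1)*(P₃ 0)*(P₃ 1)*a*b + (-16)*(P₂ 0)*(P₂ 1)*(P₃ 0)*(P₃ 1)*a^2 + (20)*(P₂ 0)*(P₂ 1)^2*(P₃ 0)*a*b + (4)*(P₂ 0)^2*a*b^3 + (-8)*(P₂ 0)^2*a^2*b^2 + (-12)*(P₂ 0)^2*a^3*b + (-8)*(P₂ 0)^2*(P₃ 0)^2*b^2 + (-16)*(P₂ 0)^2*(P₃ 0)^2*a*b + (-8)*(P₂ 0)^2*(P₃ 0)^2*a^2 + (20)*(P₂ 0)^2*(P₂ 1)*(P₃ 1)*a*b + (-8)*(P₂ 0)^2*(P₂ 1)^2*a*b + (8)*(P₂ 0)^3*(P₃ 0)*b^2 + (4)*(P₂ 0)^3*(P₃ 0)*a*b + (8)*(P₂ 0)^3*(P₃ 0)*a^2 + (-4)*(P₂ 0)^4*a*b + (12)*(P₁ 1)*(P₃ 1)*a*b^3 + (8)*(P₁ 1)*(P₃ 1)*a^2*b^2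 + (-4)*(P₁ 1)*(P₃ 1)*a^3*b + (8)*(P₁ 1)*(P₂ 1)*a*b^3 + (16)*(P₁ 1)*(P₂ 1)*a^2*b^2 + (8)*(P₁ 1)*(P₂ 1)*a^3*b + (16)*(P₁ 1)*(P₂ 1)*(P₃ 1)^2*b^2 + (40)*(P₁ 1)*(P₂ 1)*(P₃ 1)^2*a*b + (16)*(P₁ 1)*(P₂ 1)*(P₃ 1)^2*a^2 + (8)*(P₁ 1)*(P₂ 1)*(P₃ 0)^2*a*b + (-8)*(P₁ 1)*(P₂ 1)^2*(P₃ 1)*b^2 + (-16)*(P₁ 1)*(P₂ 1)^2*(P₃ 1)*a*b + (8)*(P₁ 1)*(P₂ 1)^2*(P₃ 1)*a^2 + (-8)*(P₁ 1)*(P₂ 1)^3*b^2 + (-8)*(P₁ 1)*(P₂ 1)^3*a*b + (-8)*(P₁ 1)*(P₂ 1)^3*a^2 + (16)*(P₁ 1)*(P₂ 0)*(P₃ 0)*(P₃ 1)*b^2 + (32)*(P₁ 1)*(P₂ 0)*(P₃ 0)*(P₃ 1)*a*b + (16)*(P₁ 1)*(P₂ 0)*(P₃ 0)*(P₃ 1)*a^2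 + (-16)*(P₁ 1)*(P₂ 0)*(P₂ 1)*(P₃ 0)*a*b + (-8)*(P₁ 1)*(P₂ 0)^2*(P₂ 1)*a*b + (-16)*(P₁ 1)*(P₂ 0)^2*(P₂ 1)*a^2 + (-12)*(P₁ 1)^2*a*b^3 + (-8)*(P₁ 1)^2*a^2*b^2 + (4)*(P₁ 1)^2*a^3*b + (-8)*(P₁ 1)^2*(P₃ 1)^2*b^2 + (-16)*(P₁ 1)^2*(P₃ 1)^2*a*b + (-8)*(P₁ 1)^2*(P₃ 1)^2*a^2 + (-8)*(P₁ 1)^2*(P₂ 1)*(P₃ 1)*b^2 + (-16)*(P₁ 1)^2*(P₂ 1)*(P₃ 1)*a*b + (8)*(P₁ 1)^2*(P₂ 1)*(P₃ 1)*a^2 + (16)*(P₁ 1)^2*(P₂ 1)^2*b^2 + (40)*(P₁ 1)^2*(P₂ 1)^2*a*b + (16)*(P₁ 1)^2*(P₂ 1)^2*a^2 + (-8)*(P₁ 1)^2*(P₂ 0)^2*a*b + (8)*(P₁ 1)^3*(P₃ 1)*b^2 + (4)*(P₁ 1)^3*(P₃ 1)*a*b + (8)*(P₁ 1)^3*(P₃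 1)*a^2 + (-8)*(P₁ 1)^3*(P₂ 1)*b^2 + (-8)*(P₁ 1)^3*(P₂ 1)*a*b + (-8)*(P₁ 1)^3*(P₂ 1)*a^2 + (-4)*(P₁ 1)^4*a*b + (-4)*(P₁ 0)*(P₃ 0)*a*b^3 + (8)*(P₁ 0)*(P₃ 0)*a^2*b^2 + (12)*(P₁ 0)*(P₃ 0)*a^3*b + (16)*(P₁ 0)*(P₂ 1)*(P₃ 0)*(P₃ 1)*b^2 + (32)*(P₁ 0)*(P₂ 1)*(P₃ 0)*(P₃ 1)*a*b + (16)*(P₁ 0)*(P₂ 1)*(P₃ 0)*(P₃ 1)*a^2 + (8)*(P₁ 0)*(P₂ 0)*a*b^3 + (16)*(P₁ 0)*(P₂ 0)*a^2*b^2 + (8)*(P₁ 0)*(P₂ 0)*a^3*b + (8)*(P₁ 0)*(P₂ 0)*(P₃ 1)^2*a*b + (16)*(P₁ 0)*(P₂ 0)*(P₃ 0)^2*b^2 + (40)*(P₁ 0)*(P₂ 0)*(P₃ 0)^2*a*b + (16)*(P₁ 0)*(P₂ 0)*(P₃ 0)^2*a^2 + (-16)*(P₁ 0)*(P₂ 0)*(P₂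 1)*(P₃ 1)*a*b + (-16)*(P₁ 0)*(P₂ 0)*(P₂ 1)^2*b^2 + (-8)*(P₁ 0)*(P₂ 0)*(P₂ 1)^2*a*b + (8)*(P₁ 0)*(P₂ 0)^2*(P₃ 0)*b^2 + (-16)*(P₁ 0)*(P₂ 0)^2*(P₃ 0)*a*b + (-8)*(P₁ 0)*(P₂ 0)^2*(P₃ 0)*a^2 + (-8)*(P₁ 0)*(P₂ 0)^3*b^2 + (-8)*(P₁ 0)*(P₂ 0)^3*a*b + (-8)*(P₁ 0)*(P₂ 0)^3*a^2 + (-16)*(P₁ 0)*(P₁ 1)*(P₃ 0)*(P₃ 1)*b^2 + (-32)*(P₁ 0)*(P₁ 1)*(P₃ 0)*(P₃ 1)*a*b + (-16)*(P₁ 0)*(P₁ 1)*(P₃ 0)*(P₃ 1)*a^2 + (-16)*(P₁ 0)*(P₁ 1)*(P₂ 1)*(P₃ 0)*a*b + (-16)*(P₁ 0)*(P₁ 1)*(P₂ 0)*(P₃ 1)*a*b + (32)*(P₁ 0)*(P₁ 1)*(P₂ 0)*(P₂ 1)*b^2 + (96)*(P₁ 0)*(P₁ 1)*(P₂ 0)*(P₂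 1)*a*b + (32)*(P₁ 0)*(P₁ 1)*(P₂ 0)*(P₂ 1)*a^2 + (20)*(P₁ 0)*(P₁ 1)^2*(P₃ 0)*a*b + (-16)*(P₁ 0)*(P₁ 1)^2*(P₂ 0)*b^2 + (-8)*(P₁ 0)*(P₁ 1)^2*(P₂ 0)*a*b + (4)*(P₁ 0)^2*a*b^3 + (-8)*(P₁ 0)^2*a^2*b^2 + (-12)*(P₁ 0)^2*a^3*b + (-8)*(P₁ 0)^2*(P₃ 0)^2*b^2 + (-16)*(P₁ 0)^2*(P₃ 0)^2*a*b + (-8)*(P₁ 0)^2*(P₃ 0)^2*a^2 + (-8)*(P₁ 0)^2*(P₂ 1)^2*a*b + (8)*(P₁ 0)^2*(P₂ 0)*(P₃ 0)*b^2 + (-16)*(P₁ 0)^2*(P₂ 0)*(P₃ 0)*a*b + (-8)*(P₁ 0)^2*(P₂ 0)*(P₃ 0)*a^2 + (16)*(P₁ 0)^2*(P₂ 0)^2*b^2 + (40)*(P₁ 0)^2*(P₂ 0)^2*a*b + (16)*(P₁ 0)^2*(P₂ 0)^2*a^2 + (20)*(P₁ 0)^2*(P₁ 1)*(P₃ 1)*a*b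 + (-8)*(P₁ 0)^2*(P₁ 1)*(P₂ 1)*a*b + (-16)*(P₁ 0)^2*(P₁ 1)*(P₂ 1)*a^2 + (-8)*(P₁ 0)^2*(P₁ 1)^2*a*b + (8)*(P₁ 0)^3*(P₃ 0)*b^2 + (4)*(P₁ 0)^3*(P₃ 0)*a*b + (8)*(P₁ 0)^3*(P₃ 0)*a^2 + (-8)*(P₁ 0)^3*(P₂ 0)*b^2 + (-8)*(P₁ 0)^3*(P₂ 0)*a*b + (-8)*(P₁ 0)^3*(P₂ 0)*a^2 + (-4)*(P₁ 0)^4*a*b)*hc3 +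
      ((-32)*a*b^4 + (-96)*a^2*b^3 + (-96)*a^3*b^2 + (-32)*a^4*b + (-16)*(P₃ 1)^2*b^3 + (-16)*(P₃ 1)^2*a*b^2 + (-16)*(P₃ 0)^2*a^2*b + (-16)*(P₃ 0)^2*a^3 + (-16)*(P₂ 1)^2*b^3 + (-16)*(P₂ 1)^2*a*b^2 + (32)*(P₂ 1)^2*(P₃ 1)^2*b + (32)*(P₂ 0)*(P₂ 1)*(P₃ 0)*(P₃ 1)*b + (32)*(P₂ 0)*(P₂ 1)*(P₃ 0)*(P₃ 1)*a + (-16)*(P₂ 0)^2*a^2*b + (-16)*(P₂ 0)^2*a^3 + (32)*(P₂ 0)^2*(P₃ 0)^2*a + (16)*(P₁ 1)*(P₃ 1)*b^3 + (48)*(P₁ 1)*(P₃ 1)*a*b^2 + (48)*(P₁ 1)*(P₃ 1)*a^2*b + (16)*(P₁ 1)*(P₃ 1)*a^3 + (16)*(P₁ 1)*(P₂ 1)*b^3 + (48)*(P₁ 1)*(P₂ 1)*a*b^2 + (48)*(P₁ 1)*(P₂ 1)*a^2*b + (16)*(P₁ 1)*(P₂ 1)*a^3 + (-16)*(P₁ 1)*(P₂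 1)*(P₃ 1)^2*b + (-16)*(P₁ 1)*(P₂ 1)*(P₃ 1)^2*a + (-16)*(P₁ 1)*(P₂ 1)^2*(P₃ 1)*b + (-16)*(P₁ 1)*(P₂ 1)^2*(P₃ 1)*a + (-16)*(P₁ 1)*(P₂ 0)*(P₃ 0)*(P₃ 1)*b + (-16)*(P₁ 1)*(P₂ 0)*(P₃ 0)*(P₃ 1)*a + (-16)*(P₁ 1)*(P₂ 0)*(P₂ 1)*(P₃ 0)*b + (-16)*(P₁ 1)*(P₂ 0)*(P₂ 1)*(P₃ 0)*a + (16)*(P₁ 0)*(P₃ 0)*b^3 + (48)*(P₁ 0)*(P₃ 0)*a*b^2 + (48)*(P₁ 0)*(P₃ 0)*a^2*b + (16)*(P₁ 0)*(P₃ 0)*a^3 + (-16)*(P₁ 0)*(P₂ 1)*(P₃ 0)*(P₃ 1)*b + (-16)*(P₁ 0)*(P₂ 1)*(P₃ 0)*(P₃ 1)*a + (16)*(P₁ 0)*(P₂ 0)*b^3 + (48)*(P₁ 0)*(P₂ 0)*a*b^2 + (48)*(P₁ 0)*(P₂ 0)*a^2*b + (16)*(P₁ 0)*(P₂ 0)*a^3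 + (-16)*(P₁ 0)*(P₂ 0)*(P₃ 0)^2*b + (-16)*(P₁ 0)*(P₂ 0)*(P₃ 0)^2*a + (-16)*(P₁ 0)*(P₂ 0)*(P₂ 1)*(P₃ 1)*b + (-16)*(P₁ 0)*(P₂ 0)*(P₂ 1)*(P₃ 1)*a + (-16)*(P₁ 0)*(P₂ 0)^2*(P₃ 0)*b + (-16)*(P₁ 0)*(P₂ 0)^2*(P₃ 0)*a)*hT23 +
      ((-32)*a*b^4 + (-96)*a^2*b^3 + (-96)*a^3*b^2 + (-32)*a^4*b + (-16)*(P₃ 1)^2*b^3 + (-16)*(P₃ 1)^2*a*b^2 + (-16)*(P₃ 0)^2*a^2*b + (-16)*(P₃ 0)^2*a^3 + (16)*(P₂ 1)*(P₃ 1)*b^3 + (48)*(P₂ 1)*(P₃ 1)*a*b^2 + (48)*(P₂ 1)*(P₃ 1)*a^2*b + (16)*(P₂ 1)*(P₃ 1)*a^3 + (16)*(P₂ 0)*(P₃ 0)*b^3 + (48)*(P₂ 0)*(P₃ 0)*a*b^2 + (48)*(P₂ 0)*(P₃ 0)*a^2*b + (16)*(P₂ 0)*(P₃ 0)*a^3 +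 (16)*(P₁ 1)*(P₂ 1)*b^3 + (48)*(P₁ 1)*(P₂ 1)*a*b^2 + (48)*(P₁ 1)*(P₂ 1)*a^2*b + (16)*(P₁ 1)*(P₂ 1)*a^3 + (-16)*(P₁ 1)*(P₂ 1)*(P₃ 1)^2*b + (-16)*(P₁ 1)*(P₂ 1)*(P₃ 1)^2*a + (-16)*(P₁ 1)*(P₂ 0)*(P₃ 0)*(P₃ 1)*b + (-16)*(P₁ 1)*(P₂ 0)*(P₃ 0)*(P₃ 1)*a + (-16)*(P₁ 1)^2*b^3 + (-16)*(P₁ 1)^2*a*b^2 + (32)*(P₁ 1)^2*(P₃ 1)^2*b + (-16)*(P₁ 1)^2*(P₂ 1)*(P₃ 1)*b + (-16)*(P₁ 1)^2*(P₂ 1)*(P₃ 1)*a + (-16)*(P₁ 0)*(P₂ 1)*(P₃ 0)*(P₃ 1)*b + (-16)*(P₁ 0)*(P₂ 1)*(P₃ 0)*(P₃ 1)*a + (16)*(P₁ 0)*(P₂ 0)*b^3 + (48)*(P₁ 0)*(P₂ 0)*a*b^2 + (48)*(P₁ 0)*(P₂ 0)*a^2*b + (16)*(P₁ 0)*(P₂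 0)*a^3 + (-16)*(P₁ 0)*(P₂ 0)*(P₃ 0)^2*b + (-16)*(P₁ 0)*(P₂ 0)*(P₃ 0)^2*a + (32)*(P₁ 0)*(P₁ 1)*(P₃ 0)*(P₃ 1)*b + (32)*(P₁ 0)*(P₁ 1)*(P₃ 0)*(P₃ 1)*a + (-16)*(P₁ 0)*(P₁ 1)*(P₂ 1)*(P₃ 0)*b + (-16)*(P₁ 0)*(P₁ 1)*(P₂ 1)*(P₃ 0)*a + (-16)*(P₁ 0)*(P₁ 1)*(P₂ 0)*(P₃ 1)*b + (-16)*(P₁ 0)*(P₁ 1)*(P₂ 0)*(P₃ 1)*a + (-16)*(P₁ 0)^2*a^2*b + (-16)*(P₁ 0)^2*a^3 + (32)*(P₁ 0)^2*(P₃ 0)^2*a + (-16)*(P₁ 0)^2*(P₂ 0)*(P₃ 0)*b + (-16)*(P₁ 0)^2*(P₂ 0)*(P₃ 0)*a)*hT31 +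
      ((-32)*a*b^4 + (-96)*a^2*b^3 + (-96)*a^3*b^2 + (-32)*a^4*b + (16)*(P₂ 1)*(P₃ 1)*b^3 + (48)*(P₂ 1)*(P₃ 1)*a*b^2 + (48)*(P₂ 1)*(P₃ 1)*a^2*b + (16)*(P₂ 1)*(P₃ 1)*a^3 + (-16)*(P₂ 1)^2*b^3 + (-16)*(P₂ 1)^2*a*b^2 + (16)*(P₂ 0)*(P₃ 0)*b^3 + (48)*(P₂ 0)*(P₃ 0)*a*b^2 + (48)*(P₂ 0)*(P₃ 0)*a^2*b + (16)*(P₂ 0)*(P₃ 0)*a^3 + (-16)*(P₂ 0)^2*a^2*b + (-16)*(P₂ 0)^2*a^3 + (16)*(P₁ 1)*(P₃ 1)*b^3 + (48)*(P₁ 1)*(P₃ 1)*a*b^2 + (48)*(P₁ 1)*(P₃ 1)*a^2*b + (16)*(P₁ 1)*(P₃ 1)*a^3 + (-16)*(P₁ 1)*(P₂ 1)^2*(P₃ 1)*b + (-16)*(P₁ 1)*(P₂ 1)^2*(P₃ 1)*a + (-16)*(P₁ 1)*(P₂ 0)*(P₂ 1)*(P₃ 0)*b + (-16)*(P₁ 1)*(P₂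 0)*(P₂ 1)*(P₃ 0)*a + (-16)*(P₁ 1)^2*b^3 + (-16)*(P₁ 1)^2*a*b^2 + (-16)*(P₁ 1)^2*(P₂ 1)*(P₃ 1)*b + (-16)*(P₁ 1)^2*(P₂ 1)*(P₃ 1)*a + (32)*(P₁ 1)^2*(P₂ 1)^2*b + (16)*(P₁ 0)*(P₃ 0)*b^3 + (48)*(P₁ 0)*(P₃ 0)*a*b^2 + (48)*(P₁ 0)*(P₃ 0)*a^2*b + (16)*(P₁ 0)*(P₃ 0)*a^3 + (-16)*(P₁ 0)*(P₂ 0)*(P₂ 1)*(P₃ 1)*b + (-16)*(P₁ 0)*(P₂ 0)*(P₂ 1)*(P₃ 1)*a + (-16)*(P₁ 0)*(P₂ 0)^2*(P₃ 0)*b + (-16)*(P₁ 0)*(P₂ 0)^2*(P₃ 0)*a + (-16)*(P₁ 0)*(P₁ 1)*(P₂ 1)*(P₃ 0)*b + (-16)*(P₁ 0)*(P₁ 1)*(P₂ 1)*(P₃ 0)*a + (-16)*(P₁ 0)*(P₁ 1)*(P₂ 0)*(P₃ 1)*b + (-16)*(P₁ 0)*(P₁ 1)*(P₂ 0)*(P₃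 1)*a + (32)*(P₁ 0)*(P₁ 1)*(P₂ 0)*(P₂ 1)*b + (32)*(P₁ 0)*(P₁ 1)*(P₂ 0)*(P₂ 1)*a + (-16)*(P₁ 0)^2*a^2*b + (-16)*(P₁ 0)^2*a^3 + (-16)*(P₁ 0)^2*(P₂ 0)*(P₃ 0)*b + (-16)*(P₁ 0)^2*(P₂ 0)*(P₃ 0)*a + (32)*(P₁ 0)^2*(P₂ 0)^2*a)*hT12
  have e1 : 2*(dist P₁ P₂ * dist P₁ P₃)*x = dist P₁ P₂ ^2 + dist P₁ P₃ ^2 - dist P₂ P₃ ^2 := by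
    have h := EuclideanGeometry.law_cos P₂ P₁ P₃
    rw [dist_comm P₂ P₁, dist_comm P₃ P₁] at h
    rw [hx]; linear_combination h
  have e2 : 2*(dist P₁ P₂ * dist P₂ P₃)*y = dist P₁ P₂ ^2 + dist P₂ P₃ ^2 - dist P₁ P₃ ^2 := by
    have h := EuclideanGeometry.law_cos P₁ P₂ P₃
    rw [dist_comm P₃ P₂] at h
    rw [hy]; linear_combination h
  have e3 : 2*(dist P₁ P₃ * dist P₂ P₃)*z = dist P₁ P₃ ^2 + dist P₂ P₃ ^2 - dist P₁ P₂ ^2 := by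
    have h := EuclideanGeometry.law_cos P₁ P₃ P₂
    rw [hz]; linear_combination h
  have hp : (2*(dist P₁ P₂ * dist P₁ P₃)*x) * ((2*(dist P₁ P₂ * dist P₂ P₃)*y) *
      (2*(dist P₁ P₃ * dist P₂ P₃)*z)) =
      (dist P₁ P₂ ^2 + dist P₁ P₃ ^2 - dist P₂ P₃ ^2) *
      ((dist P₁ P₂ ^2 + dist P₂ P₃ ^2 - dist P₁ P₃ ^2) *
      (dist P₁ P₃ ^2 + dist P₂ P₃ ^2 - dist P₁ P₂ ^2)) := by
    rw [e1, e2, e3]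
  have e1s : 4*(dist P₁ P₂ * dist P₁ P₃)^2*x^2 =
      (dist P₁ P₂ ^2 + dist P₁ P₃ ^2 - dist P₂ P₃ ^2)^2 := by
    linear_combination (2*(dist P₁ P₂ * dist P₁ P₃)*x +
      (dist P₁ P₂ ^2 + dist P₁ P₃ ^2 - dist P₂ P₃ ^2))*e1
  have e2s : 4*(dist P₁ P₂ * dist P₂ P₃)^2*y^2 =
      (dist P₁ P₂ ^2 + dist P₂ P₃ ^2 - dist P₁ P₃ ^2)^2 := by
    linear_combination (2*(dist P₁ P₂ * dist P₂ P₃)*y +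
      (dist P₁ P₂ ^2 + dist P₂ P₃ ^2 - dist P₁ P₃ ^2))*e2
  have e3s : 4*(dist P₁ P₃ * dist P₂ P₃)^2*z^2 =
      (dist P₁ P₃ ^2 + dist P₂ P₃ ^2 - dist P₁ P₂ ^2)^2 := by
    linear_combination (2*(dist P₁ P₃ * dist P₂ P₃)*z +
      (dist P₁ P₃ ^2 + dist P₂ P₃ ^2 - dist P₁ P₂ ^2))*e3
  have hXne : dist P₁ P₂ * dist P₁ P₃ * dist P₂ P₃ ≠ 0 :=
    mul_ne_zero (mul_ne_zero hd12 hd13) hd23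
  have h4X : (4*(dist P₁ P₂ * dist P₁ P₃ * dist P₂ P₃)^2 : ℝ) ≠ 0 :=
    mul_ne_zero (by norm_num) (pow_ne_zero 2 hXne)
  have hsph : ((x^2+y^2+z^2)*(a+b)^2) * (4*(dist P₁ P₂ * dist P₁ P₃ * dist P₂ P₃)^2) =
      ((a+b)^2 - a*b) * (4*(dist P₁ P₂ * dist P₁ P₃ * dist P₂ P₃)^2) := by
    linear_combination (a+b)^2*(dist P₂ P₃ ^2*e1s + dist P₁ P₃ ^2*e2s + dist P₁ P₂ ^2*e3s) - hG
  constructor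
  · rw [hk', show (1 : ℝ) - 2*(a*b/(2*(a+b)^2)) = ((a+b)^2 - a*b)/(a+b)^2 by
      field_simp]
    rw [eq_div_iff (pow_ne_zero 2 hR.ne')]
    exact mul_right_cancel₀ h4X hsph
  · rw [hk', eq_div_iff (by positivity : (2*(a+b)^2 : ℝ) ≠ 0)]
    refine mul_right_cancel₀ h4X ?_
    linear_combination (a+b)^2*hp + hG
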